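/- Doubling lemma for triangle colorings: Let T be the triangle with vertices (0,0), (1,0), (0,1), and let c, q be positive integers. Suppose (i) every finite planar point set admits a 2-coloring such that every homothetic copy of T containing at least c points contains both colors, and (ii) the finite point set P admits a k-coloring φ such that every homothetic copy of T containing at least q points of P contains all k colors. Then P admits a 2k-coloring such that every homothetic copy of T containing at least c²·q points of P contains all 2k colors. -/

import Mathlib

/-- A translate of the closed positive quadrant based at `(a, b)`. -/
def quadrant (a b : ℝ) : Set (ℝ × ℝ) := {p | a ≤ p.1 ∧ b ≤ p.2}

/-- The standard triangle with vertices (0,0), (1,0), (0,1). -/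
def stdT : Set (ℝ × ℝ) := {p | 0 ≤ p.1 ∧ 0 ≤ p.2 ∧ p.1 + p.2 ≤ 1}

/-- `S` is a homothetic copy (positive homothety plus translation) of `T`. -/
def IsHomCopy (T S : Set (ℝ × ℝ)) : Prop :=
  ∃ l : ℝ, 0 < l ∧ ∃ w : ℝ × ℝ, S = (fun v => l • v + w) '' T

/-- The coloring `φ` of `P` with `k` colors is polychromatic for homothetic
copies of `T` with threshold `m`: every homothetic copy of `T` containing at
least `m` points of `P` contains a point of each color. -/
def PolyColor (T : Set (ℝ × ℝ)) (P : Finset (ℝ × ℝ)) (m k : ℕ)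
    (φ : ℝ × ℝ → Fin k) : Prop :=
  ∀ S : Set (ℝ × ℝ), IsHomCopy T S → m ≤ ((P : Set (ℝ × ℝ)) ∩ S).ncard →
    ∀ i : Fin k, ∃ p ∈ P, p ∈ S ∧ φ p = i

/-!
If some color `i` of `φ` had fewer than `c` points `G` in a homothet `S` holding `c²q` points,
sort the other points of `S` into cells according to how many points of `G` lie weakly below
their antidiagonal and how many of those lie strictly to their left. There are at most `c²`
cells, and the points of one cell span a homothet that avoids `G` and stays inside `S`, so by
(ii) each cell has fewer than `q` points; then `S` holds fewer than `c + c²(q - 1) ≤ c²q` points.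
Hence every color class of `φ` meets each homothet with `c²q` points in at least `c` points, and
splitting each class in two by (i) gives the `2k`-coloring.
-/

open Filter Topology

/-- The triangle `{x ≥ a, y ≥ b, x + y ≤ t}`; for `a + b < t` these are exactly the homothetic
copies of `stdT`. -/
def tri (a b t : ℝ) : Set (ℝ × ℝ) := {p | a ≤ p.1 ∧ b ≤ p.2 ∧ p.1 + p.2 ≤ t}

lemma add_le_of_mem_tri {a b t : ℝ} {x : ℝ × ℝ} (hx : x ∈ tri a b t) : a + b ≤ t := by
  obtain ⟨h₁, h₂, h₃⟩ := hx
  linarith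

lemma image_stdT {l : ℝ} (hl : 0 < l) (w : ℝ × ℝ) :
    (fun v => l • v + w) '' stdT = tri w.1 w.2 (l + w.1 + w.2) := by
  ext p
  constructor
  · rintro ⟨v, ⟨h₁, h₂, h₃⟩, rfl⟩
    simp only [tri, Set.mem_ofPred_eq, Prod.fst_add, Prod.snd_add, Prod.smul_fst, Prod.smul_snd,
      smul_eq_mul]
    refine ⟨by nlinarith, by nlinarith, by nlinarith⟩
  · rintro ⟨h₁, h₂, h₃⟩
    refine ⟨((p.1 - w.1) / l, (p.2 - w.2) / l), ⟨?_, ?_, ?_⟩, ?_⟩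
    · exact div_nonneg (by linarith) hl.le
    · exact div_nonneg (by linarith) hl.le
    · rw [← add_div, div_le_one hl]
      linarith
    · ext <;> simp <;> field_simp <;> ring

lemma isHomCopy_tri {a b t : ℝ} (h : a + b < t) : IsHomCopy stdT (tri a b t) :=
  ⟨t - a - b, by linarith, (a, b), by rw [image_stdT (by linarith)]; congr 1; ring⟩

lemma IsHomCopy.exists_eq_tri {S : Set (ℝ × ℝ)} (h : IsHomCopy stdT S) :
    ∃ a b t, a + b < t ∧ S = tri a b t := by
  obtain ⟨l, hl, w, rfl⟩ := h
  exact ⟨w.1, w.2, l + w.1 + w.2, by linarith, image_stdT hl w⟩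

lemma exists_isHomCopy_superset_tri (P : Finset (ℝ × ℝ)) {a b t : ℝ} (hab : a + b ≤ t) :
    ∃ H, IsHomCopy stdT H ∧ tri a b t ⊆ H ∧ ∀ p ∈ P, p ∈ H → p ∈ tri a b t := by
  have hε : ∀ᶠ ε in 𝓝[>] (0 : ℝ), 0 < ε ∧ ∀ p ∈ P, p.1 + p.2 ≤ t + ε → p.1 + p.2 ≤ t := by
    refine (eventually_mem_nhdsWithin.and ((eventually_all_finset P).2 fun p _ => ?_))
    by_cases hp : p.1 + p.2 ≤ t
    · exact Eventually.of_forall fun _ _ => hp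
    · filter_upwards [nhdsWithin_le_nhds (eventually_lt_nhds (sub_pos.2 (not_le.1 hp)))]
        with ε hε h
      linarith
  obtain ⟨ε, hε, hP⟩ := hε.exists
  refine ⟨tri a b (t + ε), isHomCopy_tri (by linarith), ?_, fun p hp hpH => ?_⟩
  · rintro x ⟨h₁, h₂, h₃⟩
    exact ⟨h₁, h₂, by linarith⟩
  · exact ⟨hpH.1, hpH.2.1, hP p hp hpH.2.2⟩

def hullTri (Φ : Finset (ℝ × ℝ)) (hΦ : Φ.Nonempty) : Set (ℝ × ℝ) :=
  tri (Φ.inf' hΦ Prod.fst) (Φ.inf' hΦ Prod.snd) (Φ.sup' hΦ fun p => p.1 + p.2)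

section hullTri

variable {Φ : Finset (ℝ × ℝ)} (hΦ : Φ.Nonempty)

lemma mem_hullTri {x : ℝ × ℝ} :
    x ∈ hullTri Φ hΦ ↔ (∃ p ∈ Φ, p.1 ≤ x.1) ∧ (∃ p ∈ Φ, p.2 ≤ x.2) ∧
      ∃ p ∈ Φ, x.1 + x.2 ≤ p.1 + p.2 := by
  simp only [hullTri, tri, Set.mem_ofPred_eq, Finset.inf'_le_iff, Finset.le_sup'_iff]

lemma subset_hullTri : (Φ : Set (ℝ × ℝ)) ⊆ hullTri Φ hΦ := fun p hp =>
  (mem_hullTri hΦ).2 ⟨⟨p, hp, le_rfl⟩, ⟨p, hp, le_rfl⟩, ⟨p, hp, le_rfl⟩⟩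

lemma hullTri_subset_tri {a b t : ℝ} (h : (Φ : Set (ℝ × ℝ)) ⊆ tri a b t) :
    hullTri Φ hΦ ⊆ tri a b t := by
  intro x hx
  obtain ⟨⟨p₁, hp₁, hx₁⟩, ⟨p₂, hp₂, hx₂⟩, ⟨p₃, hp₃, hx₃⟩⟩ := (mem_hullTri hΦ).1 hx
  exact ⟨(h hp₁).1.trans hx₁, (h hp₂).2.1.trans hx₂, hx₃.trans (h hp₃).2.2⟩

end hullTri

lemma Finset.forall_mem_iff_of_card_filter_eq {α : Type*} {G : Finset α} {p q : α → Prop}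
    [DecidablePred p] [DecidablePred q]
    (hpq : (∀ x ∈ G, p x → q x) ∨ ∀ x ∈ G, q x → p x)
    (h : (G.filter p).card = (G.filter q).card) : ∀ x ∈ G, p x ↔ q x := by
  rcases hpq with hpq | hqp
  · have hsub : G.filter p ⊆ G.filter q := Finset.monotone_filter_right G hpq
    have := Finset.eq_of_subset_of_card_le hsub h.ge
    exact fun x hx => by simpa [hx] using Finset.ext_iff.1 this x
  · have hsub : G.filter q ⊆ G.filter p := Finset.monotone_filter_right G hqp
    have := Finset.eq_of_subset_of_card_le hsub h.le
    exact fun x hx => by simpa [hx] using (Finset.ext_iff.1 this x).symm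

/-- The cell of `p` in the subdivision cut out by `G`: how many points of `G` lie on or below
the antidiagonal through `p`, and how many of those lie strictly left of `p`. -/
noncomputable def cell (G : Finset (ℝ × ℝ)) (p : ℝ × ℝ) : ℕ × ℕ :=
  ((G.filter fun g => g.1 + g.2 ≤ p.1 + p.2).card,
    (G.filter fun g => g.1 + g.2 ≤ p.1 + p.2 ∧ g.1 < p.1).card)

lemma cell_lt {G : Finset (ℝ × ℝ)} {c : ℕ} (hG : G.card < c) (p : ℝ × ℝ) :
    cell G p ∈ Finset.range c ×ˢ Finset.range c := by
  simp only [cell, Finset.mem_product, Finset.mem_range]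
  exact ⟨(Finset.card_filter_le _ _).trans_lt hG, (Finset.card_filter_le _ _).trans_lt hG⟩

lemma not_mem_hullTri_of_cell_eq {G Φ : Finset (ℝ × ℝ)} (hΦ : Φ.Nonempty) {v : ℕ × ℕ}
    (hv : ∀ p ∈ Φ, cell G p = v) {g : ℝ × ℝ} (hg : g ∈ G) (hgΦ : g ∉ Φ) :
    g ∉ hullTri Φ hΦ := by
  intro hmem
  obtain ⟨⟨p₁, hp₁, hx₁⟩, -, ⟨p₃, hp₃, hs₃⟩⟩ := (mem_hullTri hΦ).1 hmem
  have hsum : ∀ p ∈ Φ, ∀ p' ∈ Φ,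
      ∀ g ∈ G, (g.1 + g.2 ≤ p.1 + p.2 ↔ g.1 + g.2 ≤ p'.1 + p'.2) := fun p hp p' hp' =>
    Finset.forall_mem_iff_of_card_filter_eq
      ((le_total (p.1 + p.2) (p'.1 + p'.2)).imp (fun h _ _ hg => hg.trans h)
        fun h _ _ hg => hg.trans h)
      (congrArg Prod.fst ((hv p hp).trans (hv p' hp').symm))
  have hleft : ∀ p ∈ Φ, ∀ p' ∈ Φ, ∀ g ∈ G,
      (g.1 + g.2 ≤ p.1 + p.2 ∧ g.1 < p.1 ↔ g.1 + g.2 ≤ p'.1 + p'.2 ∧ g.1 < p'.1) :=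
    fun p hp p' hp' =>
    Finset.forall_mem_iff_of_card_filter_eq
      ((le_total p.1 p'.1).imp
        (fun h g hg hg' => ⟨(hsum p hp p' hp' g hg).1 hg'.1, hg'.2.trans_le h⟩)
        fun h g hg hg' => ⟨(hsum p hp p' hp' g hg).2 hg'.1, hg'.2.trans_le h⟩)
      (congrArg Prod.snd ((hv p hp).trans (hv p' hp').symm))
  -- `g` is weakly below the antidiagonal and weakly right of every point of `Φ`, so a point of
  -- `Φ` not above `g` would be `g` itself.
  have hbelow : ∀ p ∈ Φ, g.1 + g.2 ≤ p.1 + p.2 := fun p hp => (hsum p₃ hp₃ p hp g hg).1 hs₃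
  have hright : ∀ p ∈ Φ, p.1 ≤ g.1 := fun p hp =>
    not_lt.1 fun h => (not_lt.2 hx₁) ((hleft p hp p₁ hp₁ g hg).1 ⟨hbelow p hp, h⟩).2
  obtain ⟨p₂, hp₂, hx₂⟩ := ((mem_hullTri hΦ).1 hmem).2.1
  have h₁ := hright p₂ hp₂
  have h₂ := hbelow p₂ hp₂
  have hg₂ : g = p₂ := Prod.ext (by linarith) (by linarith)
  exact hgΦ (hg₂ ▸ hp₂)

lemma Finset.ncard_coe_inter_eq_card_filter (P : Finset (ℝ × ℝ)) (S : Set (ℝ × ℝ)) [DecidablePred (· ∈ S)] :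
    ((P : Set (ℝ × ℝ)) ∩ S).ncard = (P.filter (· ∈ S)).card := by
  rw [← Set.ncard_coe_finset, Finset.coe_filter]
  rfl

section PolyColor

variable {P : Finset (ℝ × ℝ)} {q k : ℕ} {φ : ℝ × ℝ → Fin k}

/-- The hull of a cell, slightly enlarged, is a homothetic copy missing the color `i`. -/
lemma PolyColor.card_lt_of_cell_eq (hφ : PolyColor stdT P q k φ) {a b t : ℝ} {i : Fin k}
    {G Φ : Finset (ℝ × ℝ)} (hG : ∀ p ∈ P, p ∈ tri a b t → φ p = i → p ∈ G)
    (hΦ : Φ.Nonempty) (hΦP : Φ ⊆ P) (hΦS : (Φ : Set (ℝ × ℝ)) ⊆ tri a b t)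
    (hΦG : Disjoint Φ G) {v : ℕ × ℕ} (hv : ∀ p ∈ Φ, cell G p = v) : Φ.card < q := by
  classical
  obtain ⟨p₀, hp₀⟩ := hΦ
  obtain ⟨H, hH, hullH, hHhull⟩ := exists_isHomCopy_superset_tri P
    (add_le_of_mem_tri (subset_hullTri ⟨p₀, hp₀⟩ hp₀))
  have hH_lt : ((P : Set (ℝ × ℝ)) ∩ H).ncard < q := by
    by_contra! hq
    obtain ⟨p, hpP, hpH, rfl⟩ := hφ H hH hq i
    have hp_hull := hHhull p hpP hpH
    have hpG : p ∈ G := hG p hpP (hullTri_subset_tri ⟨p₀, hp₀⟩ hΦS hp_hull) rfl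
    exact not_mem_hullTri_of_cell_eq ⟨p₀, hp₀⟩ hv hpG (Finset.disjoint_right.1 hΦG hpG) hp_hull
  rw [Finset.ncard_coe_inter_eq_card_filter] at hH_lt
  refine lt_of_le_of_lt (Finset.card_le_card fun p hp => ?_) hH_lt
  exact Finset.mem_filter.2 ⟨hΦP hp, hullH (subset_hullTri ⟨p₀, hp₀⟩ hp)⟩

lemma PolyColor.le_ncard_color_inter {c : ℕ} (hq : 0 < q) (hφ : PolyColor stdT P q k φ)
    {S : Set (ℝ × ℝ)} (hS : IsHomCopy stdT S)
    (hcard : c ^ 2 * q ≤ ((P : Set (ℝ × ℝ)) ∩ S).ncard) (i : Fin k) :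
    c ≤ ((((P.filter fun p => φ p = i) : Finset (ℝ × ℝ)) : Set (ℝ × ℝ)) ∩ S).ncard := by
  classical
  obtain ⟨a, b, t, -, rfl⟩ := hS.exists_eq_tri
  set A := P.filter (· ∈ tri a b t)
  set G := A.filter fun p => φ p = i
  set B := A.filter fun p => ¬φ p = i
  rw [Finset.ncard_coe_inter_eq_card_filter] at hcard ⊢
  by_contra! hG
  have hGA : (P.filter fun p => φ p = i).filter (· ∈ tri a b t) = G := by
    ext p
    simp only [G, A, Finset.mem_filter]
    tauto
  rw [hGA] at hG
  have hB : B.card ≤ (q - 1) * (Finset.range c ×ˢ Finset.range c).card := by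
    refine Finset.card_le_mul_card_image_of_maps_to (fun p _ => cell_lt hG p) _ fun v _ => ?_
    rcases (B.filter fun p => cell G p = v).eq_empty_or_nonempty with hΦ | hΦ
    · simp [hΦ]
    refine Nat.le_sub_one_of_lt (hφ.card_lt_of_cell_eq (a := a) (b := b) (t := t) (i := i)
      (fun p hp hpS hpi => ?_) hΦ ?_ ?_ ?_ fun p hp => (Finset.mem_filter.1 hp).2)
    · simp [G, A, hp, hpS, hpi]
    · intro p hp
      simp only [B, A, Finset.mem_filter] at hp
      exact hp.1.1.1
    · intro p hp
      simp only [B, A, Finset.mem_coe, Finset.mem_filter] at hp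
      exact hp.1.1.2
    · refine Finset.disjoint_left.2 fun p hpΦ hpG => ?_
      simp only [B, G, Finset.mem_filter] at hpΦ hpG
      exact hpΦ.1.2 hpG.2
  have hsplit : G.card + B.card = A.card := Finset.card_filter_add_card_filter_not _
  rw [Finset.card_product, Finset.card_range] at hB
  obtain ⟨q, rfl⟩ := Nat.exists_eq_add_of_lt hq
  simp only [zero_add, Nat.add_sub_cancel] at hB hcard
  nlinarith

end PolyColor

theorem stmt_7_general (c q k : ℕ) (hq : 0 < q)
    (h2 : ∀ P : Finset (ℝ × ℝ), ∃ φ : ℝ × ℝ → Fin 2, PolyColor stdT P c 2 φ)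
    (P : Finset (ℝ × ℝ)) (φ : ℝ × ℝ → Fin k) (hφ : PolyColor stdT P q k φ) :
    ∃ ψ : ℝ × ℝ → Fin (2 * k), PolyColor stdT P (c ^ 2 * q) (2 * k) ψ := by
  classical
  choose χ hχ using fun i : Fin k => h2 (P.filter fun p => φ p = i)
  refine ⟨fun p => finProdFinEquiv (χ (φ p) p, φ p), fun S hS hcard col => ?_⟩
  obtain ⟨⟨j, i⟩, rfl⟩ := finProdFinEquiv.surjective col
  obtain ⟨p, hpi, hpS, rfl⟩ := hχ i S hS (hφ.le_ncard_color_inter hq hS hcard i) j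
  obtain ⟨hpP, rfl⟩ := Finset.mem_filter.1 hpi
  exact ⟨p, hpP, hpS, rfl⟩

theorem stmt_7 (c q k : ℕ) (hc : 0 < c) (hq : 0 < q) (hk : 0 < k)
    (h2 : ∀ P : Finset (ℝ × ℝ), ∃ φ : ℝ × ℝ → Fin 2, PolyColor stdT P c 2 φ)
    (P : Finset (ℝ × ℝ)) (φ : ℝ × ℝ → Fin k) (hφ : PolyColor stdT P q k φ) :
    ∃ ψ : ℝ × ℝ → Fin (2 * k), PolyColor stdT P (c ^ 2 * q) (2 * k) ψ :=
  stmt_7_general c q k hq h2 P φ hφ
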